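/- Let α > 2 and R > 0, and let F : ℂ⁴ → ℝ be of class C² (in the real sense) with F(0) = 0, ∇F(0) = 0, D²F(0) = 0, and |D²F(φ)| ≤ |φ|^{α−2} for all φ with |φ| ≥ R. Then for every ε > 0 there exists μ_ε > 0 such that F(φ) ≤ (ε/2)|φ|² + (μ_ε/α)|φ|^α for all φ ∈ ℂ⁴. -/

import Mathlib

/-! By continuity and `D²F 0 = 0`, `‖D²F x‖ ≤ ε/2` on a small ball around `0`; on the
compact annulus up to radius `R` it is bounded, and beyond `R` it is at most `‖x‖^(α-2)`.
Hence `‖D²F x‖ ≤ ε/2 + μ ‖x‖^(α-2)` everywhere. This bound increases with `‖x‖`, so two mean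
value inequalities along `[0, φ]`, using `F 0 = 0` and `DF 0 = 0`, give
`F φ ≤ (ε/2 + μ ‖φ‖^(α-2)) ‖φ‖² = (ε/2) ‖φ‖² + μ ‖φ‖^α`. -/

open Metric Set Real

theorem exists_le_add_mul_rpow_of_continuous {E : Type*} [NormedAddCommGroup E] [ProperSpace E]
    {g : E → ℝ} (hg : Continuous g) (hg0 : g 0 = 0) {p R : ℝ} (hp : 0 < p) (hgR : ∀ x, R ≤ ‖x‖ → g x ≤ ‖x‖ ^ p)
    {ε : ℝ} (hε : 0 < ε) : ∃ μ > 0, ∀ x, g x ≤ ε + μ * ‖x‖ ^ p := by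
  obtain ⟨δ, hδ, hsmall⟩ := continuousAt_iff.1 (hg.continuousAt (x := 0)) ε hε
  obtain ⟨C, hC⟩ := (isCompact_closedBall (0 : E) R).bddAbove_image hg.continuousOn
  have hδp : 0 < δ ^ p := rpow_pos_of_pos hδ p
  refine ⟨max 1 (C / δ ^ p), by positivity, fun x => ?_⟩
  have hμ1 : 1 ≤ max 1 (C / δ ^ p) := le_max_left _ _
  have hxp : 0 ≤ ‖x‖ ^ p := rpow_nonneg (norm_nonneg x) p
  rcases lt_or_ge ‖x‖ δ with hxδ | hxδ
  · have := hsmall (x := x) (by rwa [dist_zero_right])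
    rw [hg0, Real.dist_eq, sub_zero] at this
    nlinarith [le_abs_self (g x)]
  rcases le_or_gt ‖x‖ R with hxR | hxR
  · have hgC : g x ≤ C := hC ⟨x, mem_closedBall_zero_iff.2 hxR, rfl⟩
    calc g x ≤ C / δ ^ p * δ ^ p := by rwa [div_mul_cancel₀ _ hδp.ne']
      _ ≤ max 1 (C / δ ^ p) * ‖x‖ ^ p :=
        mul_le_mul (le_max_right _ _) (rpow_le_rpow hδ.le hxδ hp.le) hδp.le (by positivity)
      _ ≤ ε + max 1 (C / δ ^ p) * ‖x‖ ^ p := by linarith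
  · have := hgR x hxR.le
    nlinarith

section

variable {E G : Type*} [NormedAddCommGroup E] [NormedSpace ℝ E]
  [NormedAddCommGroup G] [NormedSpace ℝ G]

theorem norm_sub_le_of_norm_fderiv_le_of_monotoneOn {f : E → G} (hf : Differentiable ℝ f)
    {b : ℝ → ℝ} (hb : MonotoneOn b (Ici 0)) (hfb : ∀ x, ‖fderiv ℝ f x‖ ≤ b ‖x‖) (y : E) :
    ‖f y - f 0‖ ≤ b ‖y‖ * ‖y‖ := by
  simpa using (convex_closedBall (0 : E) ‖y‖).norm_image_sub_le_of_norm_fderiv_le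
    (fun x _ => hf x)
    (fun x hx => (hfb x).trans (hb (norm_nonneg x) (norm_nonneg y) (mem_closedBall_zero_iff.1 hx)))
    (mem_closedBall_self (norm_nonneg y)) (mem_closedBall_zero_iff.2 le_rfl)

theorem norm_le_of_norm_iteratedFDeriv_two_le {f : E → G} (hf : ContDiff ℝ 2 f) (hf0 : f 0 = 0)
    (hdf0 : fderiv ℝ f 0 = 0) {b : ℝ → ℝ} (hb : MonotoneOn b (Ici 0))
    (hfb : ∀ x, ‖iteratedFDeriv ℝ 2 f x‖ ≤ b ‖x‖) (y : E) :
    ‖f y‖ ≤ b ‖y‖ * ‖y‖ ^ 2 := by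
  have hb_nonneg : ∀ t ∈ Ici (0 : ℝ), 0 ≤ b t := fun t ht =>
    (norm_nonneg _).trans <| (hfb 0).trans <| hb (norm_nonneg 0) ht (by simpa using ht)
  have hdf : ∀ x, ‖fderiv ℝ f x‖ ≤ b ‖x‖ * ‖x‖ := by
    intro x
    simpa [hdf0] using norm_sub_le_of_norm_fderiv_le_of_monotoneOn
      ((hf.fderiv_right (m := 1) (by norm_num)).differentiable (by norm_num)) hb
      (fun z => by rw [← norm_iteratedFDeriv_one, norm_iteratedFDeriv_fderiv]; exact hfb z) x
  have hb' : MonotoneOn (fun t => b t * t) (Ici 0) := fun s hs t ht hst =>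
    mul_le_mul (hb hs ht hst) hst hs (hb_nonneg t ht)
  simpa [hf0, pow_two, mul_assoc] using
    norm_sub_le_of_norm_fderiv_le_of_monotoneOn (hf.differentiable (by norm_num)) hb' hdf y

end

theorem statement1_general (α R : ℝ) (hα : 2 < α)
    (F : EuclideanSpace ℂ (Fin 4) → ℝ) (hF : ContDiff ℝ 2 F)
    (hF0 : F 0 = 0)
    (gradF : EuclideanSpace ℂ (Fin 4) → EuclideanSpace ℂ (Fin 4))
    (hgrad : ∀ φ h : EuclideanSpace ℂ (Fin 4),
      fderiv ℝ F φ h = (inner ℂ (gradF φ) h : ℂ).re)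
    (hgrad0 : gradF 0 = 0)
    (hD2F0 : iteratedFDeriv ℝ 2 F 0 = 0)
    (hD2F : ∀ φ : EuclideanSpace ℂ (Fin 4), R ≤ ‖φ‖ →
      ‖iteratedFDeriv ℝ 2 F φ‖ ≤ ‖φ‖ ^ (α - 2)) :
    ∀ ε > 0, ∃ με > 0, ∀ φ : EuclideanSpace ℂ (Fin 4),
      F φ ≤ ε / 2 * ‖φ‖ ^ 2 + με / α * ‖φ‖ ^ α := by
  intro ε hε
  have hα2 : 0 < α - 2 := by linarith
  obtain ⟨μ, hμ, hD2μ⟩ := exists_le_add_mul_rpow_of_continuous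
    (hF.continuous_iteratedFDeriv (m := 2) le_rfl).norm (by simp [hD2F0]) hα2 hD2F (half_pos hε)
  have hdF0 : fderiv ℝ F 0 = 0 := by
    ext h
    simp [hgrad, hgrad0]
  have hmono : MonotoneOn (fun t => ε / 2 + μ * t ^ (α - 2)) (Ici 0) := fun s hs t _ hst => by
    have := rpow_le_rpow hs hst hα2.le
    dsimp only
    nlinarith
  refine ⟨α * μ, by positivity, fun φ => ?_⟩
  have hpow : ‖φ‖ ^ (α - 2) * ‖φ‖ ^ 2 = ‖φ‖ ^ α := by
    rw [← rpow_two, ← rpow_add' (norm_nonneg φ) (by linarith)]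
    ring_nf
  calc F φ ≤ ‖F φ‖ := le_abs_self _
    _ ≤ (ε / 2 + μ * ‖φ‖ ^ (α - 2)) * ‖φ‖ ^ 2 :=
      norm_le_of_norm_iteratedFDeriv_two_le hF hF0 hdF0 hmono hD2μ φ
    _ = ε / 2 * ‖φ‖ ^ 2 + α * μ / α * ‖φ‖ ^ α := by
      rw [mul_div_cancel_left₀ μ (by linarith : α ≠ 0), ← hpow]
      ring

/-- Under (H1)-(H2) with `F(0) = 0`, for every `ε > 0` there is `μ_ε > 0`
with `F(φ) ≤ (ε/2)|φ|² + (μ_ε/α)|φ|^α` for all `φ`. -/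
theorem statement1 (α R : ℝ) (hα : 2 < α) (hR : 0 < R)
    (F : EuclideanSpace ℂ (Fin 4) → ℝ) (hF : ContDiff ℝ 2 F)
    (hF0 : F 0 = 0)
    (gradF : EuclideanSpace ℂ (Fin 4) → EuclideanSpace ℂ (Fin 4))
    (hgrad : ∀ φ h : EuclideanSpace ℂ (Fin 4),
      fderiv ℝ F φ h = (inner ℂ (gradF φ) h : ℂ).re)
    (hgrad0 : gradF 0 = 0)
    (hD2F0 : iteratedFDeriv ℝ 2 F 0 = 0)
    (hD2F : ∀ φ : EuclideanSpace ℂ (Fin 4), R ≤ ‖φ‖ →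
      ‖iteratedFDeriv ℝ 2 F φ‖ ≤ ‖φ‖ ^ (α - 2)) :
    ∀ ε > 0, ∃ με > 0, ∀ φ : EuclideanSpace ℂ (Fin 4),
      F φ ≤ ε / 2 * ‖φ‖ ^ 2 + με / α * ‖φ‖ ^ α :=
  statement1_general α R hα F hF hF0 gradF hgrad hgrad0 hD2F0 hD2F
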